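/- Let I, J be open real intervals and δ: I × J → ℝ a smooth function such that (i) for each b ∈ J the function u ↦ δ(u,b) is real-analytic, (ii) there exists a natural number N such that for each b ∈ J the number of simple zeros (zeros where the partial derivative in u is nonzero) of u ↦ δ(u,b) does not exceed N, and (iii) ∂δ/∂b(u,b) > 0 for every (u,b) ∈ I × J. Then for each b ∈ J the function u ↦ δ(u,b) has at most N isolated zeros. -/

import Mathlib

open Set Filter MeasureTheory Asymptotics Metric

lemma aux_minFinset {α : Type*} (E : Finset α) (P : α → ℝ → Prop)
    (h : ∀ e ∈ E, ∃ η > 0, ∀ η', 0 < η' → η' ≤ η → P e η') :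
    ∃ η > 0, ∀ η', 0 < η' → η' ≤ η → ∀ e ∈ E, P e η' := by
  classical
  induction E using Finset.induction with
  | empty => exact ⟨1, one_pos, by simp⟩
  | @insert a s ha ih =>
    obtain ⟨η₁, hη₁, h₁⟩ := ih (fun e he => h e (Finset.mem_insert_of_mem he))
    obtain ⟨η₂, hη₂, h₂⟩ := h a (Finset.mem_insert_self a s)
    refine ⟨min η₁ η₂, lt_min hη₁ hη₂, ?_⟩
    intro η' hη'0 hη' e he
    rcases Finset.mem_insert.1 he with rfl | he
    · exact h₂ η' hη'0 (hη'.trans (min_le_right _ _))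
    · exact h₁ η' hη'0 (hη'.trans (min_le_left _ _)) e he

lemma aux_mvt (f g : ℝ → ℝ) (c x y : ℝ)
    (hd : ∀ t ∈ Set.uIcc x y, HasDerivAt f (g t) t)
    (hc : ∀ t ∈ Set.uIcc x y, c ≤ g t) (hc0 : 0 ≤ c) :
    c * |y - x| ≤ |f y - f x| := by
  rcases lt_trichotomy x y with h | rfl | h
  · have huIcc : Set.uIcc x y = Set.Icc x y := Set.uIcc_of_le h.le
    obtain ⟨ξ, hξ, hs⟩ := exists_hasDerivAt_eq_slope f g h
      (fun t ht => (hd t (huIcc ▸ ht)).continuousAt.continuousWithinAt)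
      (fun t ht => hd t (huIcc ▸ Set.Ioo_subset_Icc_self ht))
    have hcs : c ≤ (f y - f x) / (y - x) := hs ▸ hc ξ (huIcc ▸ Set.Ioo_subset_Icc_self hξ)
    have hyx : 0 < y - x := by linarith
    have h1 : c * (y - x) ≤ f y - f x := by
      rw [le_div_iff₀ hyx] at hcs; linarith
    have h2 : |y - x| = y - x := abs_of_pos hyx
    rw [h2]
    exact h1.trans (le_abs_self _)
  · simp [hc0]
  · have huIcc : Set.uIcc x y = Set.Icc y x := Set.uIcc_of_ge h.le
    obtain ⟨ξ, hξ, hs⟩ := exists_hasDerivAt_eq_slope f g h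
      (fun t ht => (hd t (huIcc ▸ ht)).continuousAt.continuousWithinAt)
      (fun t ht => hd t (huIcc ▸ Set.Ioo_subset_Icc_self ht))
    have hcs : c ≤ (f x - f y) / (x - y) := hs ▸ hc ξ (huIcc ▸ Set.Ioo_subset_Icc_self hξ)
    have hyx : 0 < x - y := by linarith
    have h1 : c * (x - y) ≤ f x - f y := by
      rw [le_div_iff₀ hyx] at hcs; linarith
    have h2 : |y - x| = x - y := by rw [abs_sub_comm]; exact abs_of_pos hyx
    rw [h2, abs_sub_comm]
    exact h1.trans (le_abs_self _)

set_option maxHeartbeats 1000000 in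
/-- A uniform bound on the number of simple zeros of the analytic
functions `δ(·, b)`, together with strict monotonicity in `b`, bounds the number
of isolated zeros of `δ(·, b)` for each `b`. -/
theorem stmt0 (i₁ i₂ j₁ j₂ : ℝ) (I J : Set ℝ)
    (hI : I = Set.Ioo i₁ i₂) (hJ : J = Set.Ioo j₁ j₂)
    (δ : ℝ × ℝ → ℝ) (hsmooth : ContDiffOn ℝ (⊤ : ℕ∞) δ (I ×ˢ J))
    (hanal : ∀ b ∈ J, ∀ u ∈ I, AnalyticAt ℝ (fun u' => δ (u', b)) u)
    (N : ℕ)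
    (hsimple : ∀ b ∈ J, ∀ S : Finset ℝ,
      (∀ u ∈ S, u ∈ I ∧ δ (u, b) = 0 ∧ deriv (fun u' => δ (u', b)) u ≠ 0) → S.card ≤ N)
    (hmono : ∀ u ∈ I, ∀ b ∈ J, 0 < deriv (fun b' => δ (u, b')) b) :
    ∀ b ∈ J, ∀ S : Finset ℝ,
      (∀ u ∈ S, u ∈ I ∧ δ (u, b) = 0 ∧ ∀ᶠ v in nhdsWithin u {u}ᶜ, δ (v, b) ≠ 0) →
      S.card ≤ N := by
  classical
  intro b hb S hS
  rcases S.eq_empty_or_nonempty with rfl | hSne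
  · exact Nat.zero_le N
  -- basic topology facts
  have hIo : IsOpen I := hI ▸ isOpen_Ioo
  have hJo : IsOpen J := hJ ▸ isOpen_Ioo
  have hopen : IsOpen (I ×ˢ J) := hIo.prod hJo
  have hcont : ContinuousOn δ (I ×ˢ J) := hsmooth.continuousOn
  have hfd : ∀ p ∈ I ×ˢ J, HasFDerivAt δ (fderiv ℝ δ p) p := fun p hp =>
    ((hsmooth.differentiableOn (by simp)).differentiableAt (hopen.mem_nhds hp)).hasFDerivAt
  set D₁ : ℝ × ℝ → ℝ := fun p => fderiv ℝ δ p (1, 0) with hD₁def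
  set D₂ : ℝ × ℝ → ℝ := fun p => fderiv ℝ δ p (0, 1) with hD₂def
  have hslice1 : ∀ p ∈ I ×ˢ J, HasDerivAt (fun u' => δ (u', p.2)) (D₁ p) p.1 := by
    rintro ⟨u, b'⟩ hp
    have hl : HasDerivAt (fun u' : ℝ => (u', b')) ((1 : ℝ), (0 : ℝ)) u :=
      (hasDerivAt_id u).prodMk (hasDerivAt_const u b')
    exact (hfd _ hp).comp_hasDerivAt u hl
  have hslice2 : ∀ p ∈ I ×ˢ J, HasDerivAt (fun b'' => δ (p.1, b'')) (D₂ p) p.2 := by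
    rintro ⟨u, b'⟩ hp
    have hl : HasDerivAt (fun b'' : ℝ => (u, b'')) ((0 : ℝ), (1 : ℝ)) b' :=
      (hasDerivAt_const b' u).prodMk (hasDerivAt_id b')
    exact (hfd _ hp).comp_hasDerivAt b' hl
  have hD₂pos : ∀ p ∈ I ×ˢ J, 0 < D₂ p := fun p hp =>
    (hslice2 p hp).deriv ▸ hmono p.1 hp.1 p.2 hp.2
  have hD₁cont : ContinuousOn D₁ (I ×ˢ J) :=
    (hsmooth.continuousOn_fderiv_of_isOpen hopen (by simp)).clm_apply continuousOn_const
  have hD₂cont : ContinuousOn D₂ (I ×ˢ J) :=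
    (hsmooth.continuousOn_fderiv_of_isOpen hopen (by simp)).clm_apply continuousOn_const
  -- strict monotonicity in the second variable
  have hstrict : ∀ u ∈ I, StrictMonoOn (fun b'' => δ (u, b'')) J := by
    intro u hu
    refine strictMonoOn_of_deriv_pos (hJ ▸ convex_Ioo j₁ j₂) ?_ ?_
    · exact hcont.comp (Continuous.continuousOn (by fun_prop)) (fun x hx => ⟨hu, hx⟩)
    · intro x hx
      rw [hJo.interior_eq] at hx
      exact hmono u hu x hx
  -- choose isolation radii
  have hrex : ∀ u₀ ∈ S, ∃ ρ, 0 < ρ ∧ Set.Icc (u₀ - ρ) (u₀ + ρ) ⊆ I ∧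
      (∀ v, v ≠ u₀ → |v - u₀| ≤ ρ → δ (v, b) ≠ 0) ∧
      (∀ v ∈ S, v ≠ u₀ → 2 * ρ < |v - u₀|) := by
    intro u₀ hu₀
    obtain ⟨hu₀I, hu₀z, hu₀iso⟩ := hS u₀ hu₀
    obtain ⟨ε₁, hε₁, hball₁⟩ := Metric.isOpen_iff.1 hIo u₀ hu₀I
    have hmem : {v | δ (v, b) ≠ 0} ∈ nhdsWithin u₀ {u₀}ᶜ := hu₀iso
    obtain ⟨ε₂, hε₂, hball₂⟩ := Metric.mem_nhdsWithin_iff.1 hmem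
    obtain ⟨ε₃, hε₃, hsep⟩ := aux_minFinset (S.erase u₀) (fun v ρ => ρ ≤ |v - u₀|)
      (fun v hv => ⟨|v - u₀|, abs_pos.2 (sub_ne_zero.2 (Finset.mem_erase.1 hv).1),
        fun η' _ h => h⟩)
    refine ⟨min (min (ε₁ / 2) (ε₂ / 2)) (ε₃ / 4), by positivity, ?_, ?_, ?_⟩
    · intro x hx
      apply hball₁
      rw [Metric.mem_ball, Real.dist_eq]
      have h1 : min (min (ε₁ / 2) (ε₂ / 2)) (ε₃ / 4) ≤ ε₁ / 2 :=
        (min_le_left _ _).trans (min_le_left _ _)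
      rw [Set.mem_Icc] at hx
      rw [abs_lt]
      constructor <;> linarith
    · intro v hv hvle
      have h1 : min (min (ε₁ / 2) (ε₂ / 2)) (ε₃ / 4) ≤ ε₂ / 2 :=
        (min_le_left _ _).trans (min_le_right _ _)
      exact hball₂ ⟨by rw [Metric.mem_ball, Real.dist_eq]; linarith, hv⟩
    · intro v hv hvne
      have h1 : min (min (ε₁ / 2) (ε₂ / 2)) (ε₃ / 4) ≤ ε₃ / 4 := min_le_right _ _
      have h2 : ε₃ ≤ |v - u₀| :=
        hsep ε₃ hε₃ le_rfl v (Finset.mem_erase.2 ⟨hvne, hv⟩)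
      linarith
  choose! r hr0 hrI hriso hrsep using hrex
  -- the compact set K
  set K : Set ℝ := ⋃ u₀ ∈ (S : Set ℝ), Set.Icc (u₀ - r u₀) (u₀ + r u₀) with hKdef
  have hK : IsCompact K := S.finite_toSet.isCompact_biUnion (fun _ _ => isCompact_Icc)
  have hKI : K ⊆ I := Set.iUnion₂_subset (fun u hu => hrI u hu)
  have hmemK : ∀ u₀ ∈ S, ∀ x ∈ Set.Icc (u₀ - r u₀) (u₀ + r u₀), x ∈ K :=
    fun u₀ hu₀ x hx => Set.mem_biUnion hu₀ hx
  -- endpoints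
  set Q : Finset (ℝ × Bool) := S ×ˢ ({true, false} : Finset Bool) with hQdef
  set ep : ℝ × Bool → ℝ := fun q => q.1 + (if q.2 then r q.1 else - r q.1) with hepdef
  have hepQ : ∀ q ∈ Q, q.1 ∈ S ∧ ep q ∈ Set.Icc (q.1 - r q.1) (q.1 + r q.1) ∧
      |ep q - q.1| = r q.1 := by
    intro q hq
    have hq1 : q.1 ∈ S := (Finset.mem_product.1 hq).1
    have hr := hr0 q.1 hq1
    refine ⟨hq1, ?_, ?_⟩ <;> rcases q with ⟨u₀, s⟩ <;> cases s <;>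
      simp only [hepdef, if_true, if_false, Bool.false_eq_true] <;>
      first
        | (rw [Set.mem_Icc]; constructor <;> simp <;> linarith)
        | (simp only [add_sub_cancel_left]; rw [abs_of_nonneg hr.le])
        | (simp only [add_sub_cancel_left]; rw [abs_of_nonpos (by linarith)]; ring)
  have hepne : ∀ q ∈ Q, δ (ep q, b) ≠ 0 := by
    intro q hq
    obtain ⟨hq1, _, habs⟩ := hepQ q hq
    have hr := hr0 q.1 hq1
    exact hriso q.1 hq1 (ep q) (by intro h; rw [h] at habs; simp at habs; linarith)
      (le_of_eq habs)
  -- choose η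
  have hbJ : b ∈ Set.Ioo j₁ j₂ := hJ ▸ hb
  obtain ⟨η₀, hη₀, hsign₀⟩ := aux_minFinset Q
    (fun q η => ∀ b'', |b'' - b| < η → |δ (ep q, b'') - δ (ep q, b)| < |δ (ep q, b)|)
    (by
      intro q hq
      obtain ⟨hq1, hqIcc, _⟩ := hepQ q hq
      have heI : ep q ∈ I := hrI q.1 hq1 hqIcc
      have hcb : ContinuousAt (fun b'' => δ (ep q, b'')) b := by
        have := (hcont.comp (Continuous.continuousOn
          (by fun_prop : Continuous (fun b'' : ℝ => ((ep q : ℝ), b''))))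
          (fun x (hx : x ∈ J) => ⟨heI, hx⟩))
        exact this.continuousAt (hJo.mem_nhds hb)
      obtain ⟨ηe, hηe, hcb'⟩ := Metric.continuousAt_iff.1 hcb |δ (ep q, b)|
        (abs_pos.2 (hepne q hq))
      exact ⟨ηe, hηe, fun η' hη'0 hη' b'' hb'' => by
        have := hcb' (x := b'') (by rw [Real.dist_eq]; linarith)
        rwa [Real.dist_eq] at this⟩)
  set η : ℝ := min η₀ (min ((b - j₁) / 2) ((j₂ - b) / 2)) with hηdef
  have hηpos : 0 < η := by
    have h1 := hbJ.1; have h2 := hbJ.2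
    apply lt_min hη₀ (lt_min (by linarith) (by linarith))
  set Icb : Set ℝ := Set.Icc (b - η) (b + η) with hIcbdef
  have hIcbJ : Icb ⊆ J := by
    rw [hJ]
    intro x hx
    rw [Set.mem_Icc] at hx
    have h1 : η ≤ (b - j₁) / 2 := (min_le_right _ _).trans (min_le_left _ _)
    have h2 : η ≤ (j₂ - b) / 2 := (min_le_right _ _).trans (min_le_right _ _)
    exact ⟨by linarith, by linarith⟩
  have hsign : ∀ q ∈ Q, ∀ b'', |b'' - b| < η →
      |δ (ep q, b'') - δ (ep q, b)| < |δ (ep q, b)| := by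
    intro q hq b'' hb''
    exact hsign₀ η hηpos (min_le_left _ _) q hq b'' hb''
  -- compact rectangle and lower bound on D₂
  set R' : Set (ℝ × ℝ) := K ×ˢ Icb with hR'def
  have hR'sub : R' ⊆ I ×ˢ J := Set.prod_mono hKI hIcbJ
  have hR'c : IsCompact R' := hK.prod isCompact_Icc
  have hR'ne : R'.Nonempty := by
    obtain ⟨u₀, hu₀⟩ := hSne
    exact ⟨(u₀, b), ⟨hmemK u₀ hu₀ u₀ (by
      rw [Set.mem_Icc]; have := hr0 u₀ hu₀; constructor <;> linarith),
      by rw [hIcbdef, Set.mem_Icc]; constructor <;> linarith⟩⟩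
  obtain ⟨p₀, hp₀R, hp₀min⟩ := hR'c.exists_isMinOn hR'ne (hD₂cont.mono hR'sub)
  set c : ℝ := D₂ p₀ with hcdef
  have hcpos : 0 < c := hD₂pos p₀ (hR'sub hp₀R)
  have hcmin : ∀ p ∈ R', c ≤ D₂ p := fun p hp => hp₀min hp
  -- the critical zero set and its projection
  set Z : Set (ℝ × ℝ) := (R' ∩ δ ⁻¹' {0}) ∩ D₁ ⁻¹' {0} with hZdef
  have hZ1 : IsCompact (R' ∩ δ ⁻¹' {0}) :=
    IsCompact.of_isClosed_subset hR'c
      ((hcont.mono hR'sub).preimage_isClosed_of_isClosed hR'c.isClosed isClosed_singleton)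
      Set.inter_subset_left
  have hZ : IsCompact Z :=
    IsCompact.of_isClosed_subset hZ1
      (((hD₁cont.mono hR'sub).mono Set.inter_subset_left).preimage_isClosed_of_isClosed
        hZ1.isClosed isClosed_singleton)
      Set.inter_subset_left
  set C : Set ℝ := Prod.fst '' Z with hCdef
  have hCcomp : IsCompact C := hZ.image continuous_fst
  have hCK : C ⊆ K := by
    rintro u ⟨p, hp, rfl⟩
    exact hp.1.1.1
  have hCex : ∀ u ∈ C, ∃ b'', b'' ∈ Icb ∧ δ (u, b'') = 0 ∧ D₁ (u, b'') = 0 := by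
    rintro u ⟨p, hp, rfl⟩
    exact ⟨p.2, hp.1.1.2, by simpa using hp.1.2, by simpa using hp.2⟩
  set φ : ℝ → ℝ := fun u =>
    if h : ∃ b'', b'' ∈ Icb ∧ δ (u, b'') = 0 ∧ D₁ (u, b'') = 0 then h.choose else b
    with hφdef
  have hφ : ∀ u ∈ C, φ u ∈ Icb ∧ δ (u, φ u) = 0 ∧ D₁ (u, φ u) = 0 := by
    intro u hu
    have h := hCex u hu
    rw [hφdef]
    simp only [dif_pos h]
    exact h.choose_spec
  -- uniqueness of zeros in the b-direction
  have huniq : ∀ u ∈ I, ∀ b₁ ∈ J, ∀ b₂ ∈ J, δ (u, b₁) = 0 → δ (u, b₂) = 0 → b₁ = b₂ := by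
    intro u hu b₁ hb₁ b₂ hb₂ h₁ h₂
    exact (hstrict u hu).injOn hb₁ hb₂ (by rw [h₁, h₂])
  -- φ has zero derivative within C
  have hderivφ : ∀ u₁ ∈ C, HasDerivWithinAt φ 0 C u₁ := by
    intro u₁ hu₁
    obtain ⟨hφ1, hφ2, hφ3⟩ := hφ u₁ hu₁
    have hu₁I : u₁ ∈ I := hKI (hCK hu₁)
    have hb₁J : φ u₁ ∈ J := hIcbJ hφ1
    have hp : (u₁, φ u₁) ∈ I ×ˢ J := ⟨hu₁I, hb₁J⟩
    have h0 : HasDerivAt (fun u => δ (u, φ u₁)) 0 u₁ := by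
      have := hslice1 (u₁, φ u₁) hp
      rwa [hφ3] at this
    have hlo : (fun u => δ (u, φ u₁) - δ (u₁, φ u₁)) =o[nhds u₁] (fun u => u - u₁) := by
      have := hasDerivAt_iff_isLittleO.1 h0
      simpa using this
    have hbound : ∀ u ∈ C, ‖φ u - φ u₁‖ ≤ c⁻¹ * ‖δ (u, φ u₁) - δ (u₁, φ u₁)‖ := by
      intro u hu
      obtain ⟨hq1, hq2, _⟩ := hφ u hu
      have huI : u ∈ I := hKI (hCK hu)
      have hsub : Set.uIcc (φ u) (φ u₁) ⊆ Icb := Set.uIcc_subset_Icc hq1 hφ1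
      have hm : c * |φ u₁ - φ u| ≤ |δ (u, φ u₁) - δ (u, φ u)| :=
        aux_mvt (fun t => δ (u, t)) (fun t => D₂ (u, t)) c (φ u) (φ u₁)
          (fun t ht => hslice2 (u, t) ⟨huI, hIcbJ (hsub ht)⟩)
          (fun t ht => hcmin (u, t) ⟨hCK hu, hsub ht⟩) hcpos.le
      rw [hq2, sub_zero] at hm
      rw [Real.norm_eq_abs, Real.norm_eq_abs, hφ2, sub_zero, abs_sub_comm,
        inv_mul_eq_div, le_div_iff₀ hcpos]
      calc |φ u₁ - φ u| * c = c * |φ u₁ - φ u| := by ring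
        _ ≤ |δ (u, φ u₁)| := hm
    have hO : (fun u => φ u - φ u₁) =O[nhdsWithin u₁ C]
        (fun u => δ (u, φ u₁) - δ (u₁, φ u₁)) :=
      (Asymptotics.isBigOWith_iff.2 (eventually_nhdsWithin_of_forall hbound)).isBigO
    have hfin := hO.trans_isLittleO (hlo.mono nhdsWithin_le_nhds)
    rw [hasDerivWithinAt_iff_isLittleO]
    simpa using hfin
  -- the image of C under φ has measure zero (baby Sard)
  have hsmul : (1 : ℝ →L[ℝ] ℝ).smulRight (0 : ℝ) = 0 := by ext x; simp
  have hbad : volume (φ '' C) = 0 := by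
    apply addHaar_image_eq_zero_of_det_fderivWithin_eq_zero (f' := fun _ => 0) volume
    · intro x hx
      have h := (hderivφ x hx).hasFDerivWithinAt
      rwa [ContinuousLinearMap.toSpanSingleton_zero] at h
    · intro x _
      simp [ContinuousLinearMap.det]
  -- we can pick good parameter values
  have hpick : ∀ lo hi : ℝ, lo < hi → ∃ b', b' ∈ Set.Ioo lo hi ∧ b' ∉ φ '' C := by
    intro lo hi hlh
    by_contra h
    push_neg at h
    have hsub : Set.Ioo lo hi ⊆ φ '' C := fun x hx => h x hx
    have h2 : (volume : Measure ℝ) (Set.Ioo lo hi) ≤ volume (φ '' C) :=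
      measure_mono hsub
    rw [hbad, Real.volume_Ioo] at h2
    simp only [nonpos_iff_eq_zero, ENNReal.ofReal_eq_zero] at h2
    linarith
  -- goodness: all zeros in K at a good parameter are simple
  have hgood : ∀ b' ∈ Icb, b' ∉ φ '' C → ∀ u ∈ K, δ (u, b') = 0 → D₁ (u, b') ≠ 0 := by
    intro b' hb' hb'good u hu hz hD
    have hZmem : (u, b') ∈ Z := ⟨⟨⟨hu, hb'⟩, by simpa using hz⟩, by simpa using hD⟩
    have hC : u ∈ C := ⟨(u, b'), hZmem, rfl⟩
    obtain ⟨h1, h2, _⟩ := hφ u hC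
    have : φ u = b' :=
      huniq u (hKI hu) (φ u) (hIcbJ h1) b' (hIcbJ hb') h2 hz
    exact hb'good ⟨u, hC, this⟩
  -- the key counting bound for a good parameter value
  have key : ∀ b', b' ∈ Set.Ioo (b - η) (b + η) → b' ≠ b → b' ∉ φ '' C →
      (Q.filter (fun q => 0 < δ (ep q, b) * (b - b'))).card ≤ N := by
    intro b' hb'Ioo hb'ne hb'good
    have hb'Icb : b' ∈ Icb := Set.Ioo_subset_Icc_self hb'Ioo
    have hb'J : b' ∈ J := hIcbJ hb'Icb
    set F := Q.filter (fun q => 0 < δ (ep q, b) * (b - b')) with hFdef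
    have hcenter : ∀ u₀ ∈ S, u₀ ∈ I ∧ δ (u₀, b') ≠ 0 := by
      intro u₀ hu₀
      have hu₀I : u₀ ∈ I := (hS u₀ hu₀).1
      have hu₀z : δ (u₀, b) = 0 := (hS u₀ hu₀).2.1
      refine ⟨hu₀I, ?_⟩
      rcases lt_or_gt_of_ne hb'ne with hlt | hgt
      · have := hstrict u₀ hu₀I hb'J hb hlt
        try simp only at this
        rw [hu₀z] at this
        exact this.ne
      · have := hstrict u₀ hu₀I hb hb'J hgt
        try simp only at this
        rw [hu₀z] at this
        exact this.ne'
    -- a zero of δ(·, b') strictly between the center and each captured endpoint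
    have hz : ∀ q ∈ F, ∃ u', u' ∈ Set.uIcc q.1 (ep q) ∧ δ (u', b') = 0 := by
      intro q hqF
      have hqQ : q ∈ Q := (Finset.mem_filter.1 hqF).1
      have hqP : 0 < δ (ep q, b) * (b - b') := (Finset.mem_filter.1 hqF).2
      obtain ⟨hq1, hqIcc, _⟩ := hepQ q hqQ
      have hq1I : q.1 ∈ I := (hcenter q.1 hq1).1
      have hu₀z : δ (q.1, b) = 0 := (hS q.1 hq1).2.1
      have hqsign := hsign q hqQ b' (by
        rw [Set.mem_Ioo] at hb'Ioo; rw [abs_lt]; constructor <;> linarith)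
      have hsgn : (δ (q.1, b') < 0 ∧ 0 < δ (ep q, b')) ∨
          (0 < δ (q.1, b') ∧ δ (ep q, b') < 0) := by
        rcases mul_pos_iff.1 hqP with ⟨hsp, hd⟩ | ⟨hsn, hd⟩
        · left
          constructor
          · have hlt : b' < b := by linarith
            have := hstrict q.1 hq1I hb'J hb hlt
            try simp only at this
            rw [hu₀z] at this
            exact this
          · rw [abs_of_pos hsp, abs_lt] at hqsign
            linarith
        · right
          constructor
          · have hgt : b < b' := by linarith
            have := hstrict q.1 hq1I hb hb'J hgt
            try simp only at this
            rw [hu₀z] at this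
            exact this
          · rw [abs_of_neg hsn, abs_lt] at hqsign
            linarith
      have hsubI : Set.uIcc q.1 (ep q) ⊆ I := by
        refine (Set.uIcc_subset_Icc ?_ hqIcc).trans (hrI q.1 hq1)
        rw [Set.mem_Icc]
        have := hr0 q.1 hq1
        constructor <;> linarith
      have hcont' : ContinuousOn (fun u => δ (u, b')) (Set.uIcc q.1 (ep q)) :=
        hcont.comp (Continuous.continuousOn (by fun_prop))
          (fun x hx => ⟨hsubI hx, hb'J⟩)
      have h0mem : (0 : ℝ) ∈ Set.uIcc (δ (q.1, b')) (δ (ep q, b')) := by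
        rw [Set.mem_uIcc]
        rcases hsgn with ⟨h1, h2⟩ | ⟨h1, h2⟩
        · exact Or.inl ⟨h1.le, h2.le⟩
        · exact Or.inr ⟨h2.le, h1.le⟩
      obtain ⟨u', hu'mem, hu'z⟩ := intermediate_value_uIcc hcont' h0mem
      exact ⟨u', hu'mem, hu'z⟩
    have hzch : ∀ q : ℝ × Bool, ∃ u',
        q ∈ F → u' ∈ Set.uIcc q.1 (ep q) ∧ δ (u', b') = 0 := by
      intro q
      by_cases hq : q ∈ F
      · obtain ⟨u', h⟩ := hz q hq
        exact ⟨u', fun _ => h⟩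
      · exact ⟨0, fun h => absurd h hq⟩
    choose g hg using hzch
    -- facts about the chosen zeros
    have hgIcc : ∀ q ∈ F, g q ∈ Set.Icc (q.1 - r q.1) (q.1 + r q.1) := by
      intro q hqF
      have hqQ : q ∈ Q := (Finset.mem_filter.1 hqF).1
      obtain ⟨hq1, hqIcc, _⟩ := hepQ q hqQ
      refine Set.uIcc_subset_Icc ?_ hqIcc ((hg q hqF).1)
      rw [Set.mem_Icc]
      have := hr0 q.1 hq1
      constructor <;> linarith
    have hgK : ∀ q ∈ F, g q ∈ K := fun q hqF =>
      hmemK q.1 ((Finset.mem_filter.1 hqF).1 |> Finset.mem_product.1 |>.1) _ (hgIcc q hqF)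
    have hgne : ∀ q ∈ F, g q ≠ q.1 := by
      intro q hqF h
      have hq1 : q.1 ∈ S := (Finset.mem_filter.1 hqF).1 |> Finset.mem_product.1 |>.1
      exact (hcenter q.1 hq1).2 (h ▸ (hg q hqF).2)
    -- injectivity
    have hinj : Set.InjOn g F := by
      intro q hqF q' hq'F heq
      have hqF : q ∈ F := Finset.mem_coe.1 hqF
      have hq'F : q' ∈ F := Finset.mem_coe.1 hq'F
      have hq1 : q.1 ∈ S := (Finset.mem_filter.1 hqF).1 |> Finset.mem_product.1 |>.1
      have hq'1 : q'.1 ∈ S := (Finset.mem_filter.1 hq'F).1 |> Finset.mem_product.1 |>.1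
      by_contra hne
      by_cases h11 : q.1 = q'.1
      · have h22 : q.2 ≠ q'.2 := fun h => hne (Prod.ext h11 h)
        have hrq := hr0 q.1 hq1
        have hm1 := (hg q hqF).1
        have hm2 := (hg q' hq'F).1
        rw [← heq, ← h11] at hm2
        have : g q = q.1 := by
          rcases q with ⟨u₀, s⟩
          rcases q' with ⟨u₀', s'⟩
          simp only at h11 h22 hm1 hm2 ⊢
          subst h11
          have e1 : ep (u₀, true) = u₀ + r u₀ := by simp [hepdef]
          have e2 : ep (u₀, false) = u₀ - r u₀ := by
            simp [hepdef, sub_eq_add_neg]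
          cases s <;> cases s'
          · exact absurd rfl h22
          · rw [e2] at hm1; rw [e1] at hm2
            rw [Set.mem_uIcc] at hm1 hm2
            rcases hm1 with ⟨a1, a2⟩ | ⟨a1, a2⟩ <;>
              rcases hm2 with ⟨b1, b2⟩ | ⟨b1, b2⟩ <;> linarith
          · rw [e1] at hm1; rw [e2] at hm2
            rw [Set.mem_uIcc] at hm1 hm2
            rcases hm1 with ⟨a1, a2⟩ | ⟨a1, a2⟩ <;>
              rcases hm2 with ⟨b1, b2⟩ | ⟨b1, b2⟩ <;> linarith
          · exact absurd rfl h22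
        exact hgne q hqF this
      · have hsep1 := hrsep q.1 hq1 q'.1 hq'1 (fun h => h11 h.symm)
        have hsep2 := hrsep q'.1 hq'1 q.1 hq1 h11
        have hd1 : |g q - q.1| ≤ r q.1 := by
          have := hgIcc q hqF
          rw [Set.mem_Icc] at this
          rw [abs_le]
          constructor <;> linarith [this.1, this.2]
        have hd2 : |g q - q'.1| ≤ r q'.1 := by
          have := hgIcc q' hq'F
          rw [← heq, Set.mem_Icc] at this
          rw [abs_le]
          constructor <;> linarith [this.1, this.2]
        have htri : |q'.1 - q.1| ≤ |q'.1 - g q| + |g q - q.1| := abs_sub_le _ _ _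
        have habs1 : |q'.1 - g q| = |g q - q'.1| := abs_sub_comm _ _
        have habs2 : |q.1 - q'.1| = |q'.1 - q.1| := abs_sub_comm _ _
        linarith
    -- apply the simple-zero bound
    have hTle : (F.image g).card ≤ N := by
      apply hsimple b' hb'J
      intro u' hu'
      obtain ⟨q, hqF, rfl⟩ := Finset.mem_image.1 hu'
      have hgI : g q ∈ I := hKI (hgK q hqF)
      refine ⟨hgI, (hg q hqF).2, ?_⟩
      have hd := (hslice1 (g q, b') ⟨hgI, hb'J⟩).deriv
      rw [hd]
      exact hgood b' hb'Icb hb'good (g q) (hgK q hqF) ((hg q hqF).2)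
    rw [Finset.card_image_of_injOn hinj] at hTle
    exact hTle
  -- pick the two good parameter values and conclude
  obtain ⟨bdn, hbdn, hbdngood⟩ := hpick (b - η) b (by linarith)
  obtain ⟨bup, hbup, hbupgood⟩ := hpick b (b + η) (by linarith)
  rw [Set.mem_Ioo] at hbdn hbup
  have h1 := key bdn (Set.mem_Ioo.2 ⟨hbdn.1, by linarith [hbdn.2]⟩) hbdn.2.ne hbdngood
  have h2 := key bup (Set.mem_Ioo.2 ⟨by linarith [hbup.1], hbup.2⟩) hbup.1.ne' hbupgood
  have hcompl : Q.filter (fun q => 0 < δ (ep q, b) * (b - bup)) =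
      Q.filter (fun q => ¬ (0 < δ (ep q, b) * (b - bdn))) := by
    apply Finset.filter_congr
    intro q hq
    have hne := hepne q hq
    have hd1 : 0 < b - bdn := by linarith [hbdn.2]
    have hd2 : b - bup < 0 := by linarith [hbup.1]
    try simp only [eq_iff_iff]
    constructor
    · intro h hcontra
      rcases mul_pos_iff.1 h with ⟨hs, hd⟩ | ⟨hs, hd⟩
      · linarith
      · rcases mul_pos_iff.1 hcontra with ⟨hs', hd'⟩ | ⟨hs', hd'⟩
        · linarith
        · linarith
    · intro h
      have hsle : δ (ep q, b) ≤ 0 := by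
        by_contra hps
        push_neg at hps
        exact h (mul_pos hps hd1)
      exact mul_pos_of_neg_of_neg (lt_of_le_of_ne hsle hne) hd2
  have hpart := Finset.card_filter_add_card_filter_not
    (s := Q) (p := fun q => 0 < δ (ep q, b) * (b - bdn))
  have hQcard : Q.card = S.card * 2 := by
    rw [hQdef, Finset.card_product]
    norm_num
  rw [hcompl] at h2
  omega
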